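/- Let 𝒢_C be the rescaled Gaussian kernel, and let Q₂(r) = ((B(x,3r/2) \ B(x,5r/4)) ∩ Ω) × (t - (3r/2)², t]. Then for any (z,τ) with z ∈ B(x,r) and τ ∈ (t - r², t], one has ∫_{Q₂(r)} 𝒢_C(z - y, τ - ρ)² dy dρ ≤ C' r^{2-n}, for a constant C' depending only on n and C. -/

import Mathlib

open Real MeasureTheory Set Metric

/-- Rescaled Gaussian kernel, extended by `0` for nonpositive times. -/
noncomputable def gaussKernelC (n : ℕ) (c : ℝ) (x : EuclideanSpace ℝ (Fin n)) (t : ℝ) : ℝ :=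
  if 0 < t then c⁻¹ * (4 * π * t) ^ (-(n : ℝ) / 2) * Real.exp (-(c * ‖x‖ ^ 2) / (4 * t)) else 0

/-!
Since `z ∈ B(x, r)` and `y ∉ B(x, 5r/4)`, the space variable of the kernel stays at distance
at least `r/4` from the origin. There, `s⁻ⁿ exp(-a/s) ≤ n!/aⁿ` (one term of the exponential
series) bounds `𝒢_C²` uniformly in time by a multiple of `r⁻²ⁿ`, and the domain of integration
has volume at most a multiple of `rⁿ⁺²`.
-/

open scoped Nat

lemma inv_pow_mul_exp_neg_div_le {a s : ℝ} (ha : 0 < a) (hs : 0 < s) (n : ℕ) :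
    (s ^ n)⁻¹ * exp (-a / s) ≤ n ! / a ^ n := by
  have h := pow_div_factorial_le_exp _ (div_pos ha hs).le n
  rw [neg_div, exp_neg, ← mul_inv, le_div_iff₀ (by positivity), inv_mul_le_iff₀ (by positivity)]
  rw [div_pow, div_le_iff₀ (by positivity), div_le_iff₀ (by positivity)] at h
  linarith

lemma sub_le_dist_of_mem_ball_of_notMem_ball {E : Type*} [PseudoMetricSpace E] {x y z : E}
    {r R : ℝ} (hz : z ∈ ball x r) (hy : y ∉ ball x R) : R - r ≤ dist z y := by
  rw [mem_ball] at hz hy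
  linarith [dist_triangle_left y x z, dist_comm y z]

lemma gaussKernelC_sq_of_pos (n : ℕ) (c : ℝ) (y : EuclideanSpace ℝ (Fin n)) {s : ℝ} (hs : 0 < s) :
    gaussKernelC n c y s ^ 2
      = (c ^ 2 * (4 * π) ^ n)⁻¹ * ((s ^ n)⁻¹ * exp (-(c * ‖y‖ ^ 2 / 2) / s)) := by
  have hsq : ((4 * π * s) ^ (-(n : ℝ) / 2)) ^ 2 = ((4 * π * s) ^ n)⁻¹ := by
    rw [← rpow_mul_natCast (by positivity), ← rpow_natCast, ← rpow_neg (by positivity)]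
    ring_nf
  have hexp : exp (-(c * ‖y‖ ^ 2) / (4 * s)) ^ 2 = exp (-(c * ‖y‖ ^ 2 / 2) / s) := by
    rw [← exp_nat_mul]
    congr 1
    field_simp
    ring
  rw [gaussKernelC, if_pos hs, mul_pow, mul_pow, hsq, hexp, mul_pow]
  field_simp

noncomputable def gaussKernelCSqConst (n : ℕ) (c : ℝ) : ℝ :=
  n ! * (2 / c) ^ n / (c ^ 2 * (4 * π) ^ n)

lemma gaussKernelCSqConst_pos (n : ℕ) {c : ℝ} (hc : 0 < c) : 0 < gaussKernelCSqConst n c := by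
  unfold gaussKernelCSqConst; positivity

lemma gaussKernelC_sq_le (n : ℕ) {c d : ℝ} (hc : 0 < c) (hd : 0 < d)
    {y : EuclideanSpace ℝ (Fin n)} (hy : d ≤ ‖y‖) (s : ℝ) :
    gaussKernelC n c y s ^ 2 ≤ gaussKernelCSqConst n c / d ^ (2 * n) := by
  rcases le_or_gt s 0 with hs | hs
  · rw [gaussKernelC, if_neg hs.not_gt, zero_pow two_ne_zero]
    exact div_nonneg (gaussKernelCSqConst_pos n hc).le (by positivity)
  calc gaussKernelC n c y s ^ 2
      ≤ (c ^ 2 * (4 * π) ^ n)⁻¹ * ((s ^ n)⁻¹ * exp (-(c * d ^ 2 / 2) / s)) := by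
        rw [gaussKernelC_sq_of_pos n c y hs]
        gcongr
    _ ≤ (c ^ 2 * (4 * π) ^ n)⁻¹ * (n ! / (c * d ^ 2 / 2) ^ n) := by
        gcongr
        exact inv_pow_mul_exp_neg_div_le (by positivity) hs n
    _ = gaussKernelCSqConst n c / d ^ (2 * n) := by
        rw [gaussKernelCSqConst, pow_mul, div_pow, div_pow, mul_pow]
        field_simp
        rw [mul_pow]

lemma measureReal_prod_Ioc_le {E : Type*} [NormedAddCommGroup E] [NormedSpace ℝ E]
    [MeasurableSpace E] [BorelSpace E] [FiniteDimensional ℝ E] (μ : Measure E) [μ.IsAddHaarMeasure]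
    {A : Set E} {x : E} {R : ℝ} (hR : 0 ≤ R) (hA : A ⊆ ball x R) {a b : ℝ} (hab : a ≤ b) :
    (μ.prod volume).real (A ×ˢ Ioc a b) ≤ R ^ Module.finrank ℝ E * μ.real (ball 0 1) * (b - a) := by
  rw [measureReal_prod_prod, volume_real_Ioc_of_le hab, ← Measure.addHaar_real_closedBall μ x hR]
  gcongr
  · exact measure_closedBall_lt_top.ne
  · exact hA.trans ball_subset_closedBall

theorem stmt11_general (n : ℕ) (C : ℝ) (hC : 0 < C) :
    ∃ C' > 0, ∀ (Ω : Set (EuclideanSpace ℝ (Fin n))) (x : EuclideanSpace ℝ (Fin n)) (t r : ℝ),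
      0 < r → ∀ z ∈ ball x r, ∀ τ ∈ Ioc (t - r ^ 2) t,
        (∫ p in ((ball x (3 * r / 2) \ ball x (5 * r / 4)) ∩ Ω) ×ˢ Ioc (t - (3 * r / 2) ^ 2) t,
            (gaussKernelC n C (z - p.1) (τ - p.2)) ^ 2)
          ≤ C' * r ^ ((2 : ℝ) - n) := by
  set κ := volume.real (ball (0 : EuclideanSpace ℝ (Fin n)) 1)
  have hκ : 0 < κ := ENNReal.toReal_pos (measure_ball_pos _ _ one_pos).ne' measure_ball_lt_top.ne
  have hK := gaussKernelCSqConst_pos n hC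
  refine ⟨gaussKernelCSqConst n C * 16 ^ n * (3 / 2) ^ n * κ * (3 / 2) ^ 2, by positivity, ?_⟩
  intro Ω x t r hr z hz τ _
  set A := (ball x (3 * r / 2) \ ball x (5 * r / 4)) ∩ Ω
  set S := A ×ˢ Ioc (t - (3 * r / 2) ^ 2) t
  have hpointwise : ∀ p ∈ S, ‖gaussKernelC n C (z - p.1) (τ - p.2) ^ 2‖
      ≤ gaussKernelCSqConst n C / (r / 4) ^ (2 * n) := by
    rintro p ⟨⟨⟨-, hp⟩, -⟩, -⟩
    have hdist : r / 4 ≤ ‖z - p.1‖ := by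
      rw [← dist_eq_norm]
      linarith [sub_le_dist_of_mem_ball_of_notMem_ball hz hp]
    rw [Real.norm_of_nonneg (sq_nonneg _)]
    exact gaussKernelC_sq_le n hC (by positivity) hdist _
  have hvol : volume.real S ≤ (3 * r / 2) ^ n * κ * (3 * r / 2) ^ 2 := by
    have := measureReal_prod_Ioc_le volume (by positivity) (fun y (hy : y ∈ A) => hy.1.1)
      (sub_le_self t (sq_nonneg (3 * r / 2)))
    rwa [sub_sub_cancel, finrank_euclideanSpace_fin, ← Measure.volume_eq_prod] at this
  have hfin : volume S < ⊤ :=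
    ((isBounded_ball.subset fun y hy => hy.1.1).prod (isBounded_Ioc _ _)).measure_lt_top
  calc _ ≤ ‖∫ p in S, gaussKernelC n C (z - p.1) (τ - p.2) ^ 2‖ := le_norm_self _
    _ ≤ gaussKernelCSqConst n C / (r / 4) ^ (2 * n) * volume.real S :=
        norm_setIntegral_le_of_norm_le_const hfin hpointwise
    _ ≤ gaussKernelCSqConst n C / (r / 4) ^ (2 * n) * ((3 * r / 2) ^ n * κ * (3 * r / 2) ^ 2) := by
        gcongr
    _ = _ := by
        rw [rpow_sub hr, rpow_natCast, rpow_two, div_pow r, pow_mul (4 : ℝ)]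
        field_simp
        ring

theorem stmt11 (n : ℕ) (hn : 1 ≤ n) (C : ℝ) (hC : 0 < C) :
    ∃ C' > 0, ∀ (Ω : Set (EuclideanSpace ℝ (Fin n))) (x : EuclideanSpace ℝ (Fin n)) (t r : ℝ),
      0 < r → ∀ z ∈ ball x r, ∀ τ ∈ Ioc (t - r ^ 2) t,
        (∫ p in ((ball x (3 * r / 2) \ ball x (5 * r / 4)) ∩ Ω) ×ˢ Ioc (t - (3 * r / 2) ^ 2) t,
            (gaussKernelC n C (z - p.1) (τ - p.2)) ^ 2)
          ≤ C' * r ^ ((2 : ℝ) - n) :=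
  stmt11_general n C hC
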